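/- Let B be an infinite Boolean algebra that is ℵ₁-saturated as a structure in the language of Boolean algebras. Then there is a countably infinite set A ⊆ B such that for every k ≥ 2 and every k-hypergraph E on A there is a set Y ⊆ B^k definable with parameters in B with: E(a₁,…,a_k) if and only if (a₁,…,a_k) ∈ Y, for all a₁,…,a_k ∈ A. (This is the key step showing that every infinite Boolean algebra is trace maximal.) -/

import Mathlib

open FirstOrder FirstOrder.Language

/-- `M` is `ℵ₁`-saturated: every countable finitely realized set of formulas in one free
variable with parameters from `M` is realized in `M`. -/
def Aleph1Saturated (L : Language) (M : Type*) [L.Structure M] : Prop :=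
  ∀ Sig : Set (L[[(Set.univ : Set M)]].Formula (Fin 1)), Sig.Countable →
    (∀ s : Finset (L[[(Set.univ : Set M)]].Formula (Fin 1)), ↑s ⊆ Sig →
      ∃ a : Fin 1 → M, ∀ φ ∈ s, Formula.Realize φ a) →
    ∃ a : Fin 1 → M, ∀ φ ∈ Sig, Formula.Realize φ a

/-- `E` is a `k`-hypergraph on the set `A`: a symmetric `k`-ary relation, supported on tuples
of pairwise distinct elements of `A`. -/
def IsHypergraphOn {V : Type*} (k : ℕ) (A : Set V) (E : (Fin k → V) → Prop) : Prop :=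
  (∀ a : Fin k → V, E a → ∀ i : Fin k, a i ∈ A) ∧
  (∀ a : Fin k → V, E a → Function.Injective a) ∧
  (∀ (σ : Equiv.Perm (Fin k)) (a : Fin k → V), E a → E (a ∘ σ))

/-- The function symbols of the first-order language of Boolean algebras. -/
inductive boolFunc : ℕ → Type
  | bot : boolFunc 0
  | top : boolFunc 0
  | compl : boolFunc 1
  | inf : boolFunc 2
  | sup : boolFunc 2

/-- The relation symbols of the first-order language of Boolean algebras. -/
inductive boolRel : ℕ → Type
  | le : boolRel 2

/-- The first-order language of Boolean algebras. -/
def boolLang : Language := ⟨boolFunc, boolRel⟩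

/-- A Boolean algebra as a first-order structure in the language of Boolean algebras. -/
instance (B : Type*) [BooleanAlgebra B] : boolLang.Structure B where
  funMap := fun {n} f x =>
    match n, f, x with
    | 0, .bot, _ => ⊥
    | 0, .top, _ => ⊤
    | 1, .compl, x => (x 0)ᶜ
    | 2, .inf, x => x 0 ⊓ x 1
    | 2, .sup, x => x 0 ⊔ x 1
  RelMap := fun {n} R x => match n, R with | 2, .le => x 0 ≤ x 1


/-! Choose pairwise disjoint nonzero elements `d F` indexed by the finite sets `F ⊆ ℕ`; they exist
in every infinite Boolean algebra. By saturation there are `a i` containing `d F` when `i ∈ F` and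
disjoint from `d F` otherwise; take `A = {a i}`. For a `k`-hypergraph, saturation gives `c` with
`c ⊓ a i₁ ⊓ ⋯ ⊓ a iₖ ≠ ⊥` exactly on the edges: finitely many of these conditions are met by the
join of the `d F` over the edges `F` among them, as no `k`-set is contained in another. The
hypergraph is then the trace on `A` of "the `xᵢ` are distinct and `c ⊓ x₁ ⊓ ⋯ ⊓ xₖ ≠ ⊥`". -/

open Set Function

section Saturation

variable {L : Language} {M : Type*} [L.Structure M]

theorem Aleph1Saturated.exists_forall_mem (hsat : Aleph1Saturated L M) {ι : Type*} [Countable ι]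
    {S : ι → Set M} (hS : ∀ i, (univ : Set M).Definable₁ L (S i))
    (hfin : ∀ s : Finset ι, ∃ v, ∀ i ∈ s, v ∈ S i) : ∃ v, ∀ i, v ∈ S i := by
  classical
  choose φ hφ using hS
  obtain ⟨v, hv⟩ := hsat (range φ) (countable_range φ) fun t ht => by
    obtain ⟨s, -, rfl⟩ := Finset.subset_set_image_iff.1 (image_univ.symm ▸ ht)
    obtain ⟨v, hv⟩ := hfin s
    exact ⟨fun _ => v, Finset.forall_mem_image.2 fun i hi => (Set.ext_iff.1 (hφ i) _).1 (hv i hi)⟩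
  exact ⟨v 0, fun i => (Set.ext_iff.1 (hφ i) v).2 (hv _ (mem_range_self i))⟩

theorem definable_setOf_injective (A : Set M) {α : Type*} [Finite α] :
    A.Definable L {x : α → M | Injective x} := by
  have hEq : ∀ i j : α, A.Definable L {x : α → M | x i = x j} := fun i j =>
    ⟨(Term.var i).equal (Term.var j), by ext; simp⟩
  have hInj : {x : α → M | Injective x} = ⋂ i, ⋂ j, {x | x i = x j → i = j} := by
    ext; simp [Injective]
  rw [hInj]
  refine definable_iInter_of_finite fun i => definable_iInter_of_finite fun j => ?_
  by_cases hij : i = j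
  · simp [hij, definable_univ]
  · simpa [hij, compl_ofPred] using (hEq i j).compl

end Saturation

section BooleanAlgebra

variable {B : Type*} [BooleanAlgebra B]

theorem definable₂_le (A : Set B) : A.Definable₂ boolLang {p : B × B | p.1 ≤ p.2} :=
  ⟨Relations.formula₂ (Sum.inl boolRel.le) (Term.var 0) (Term.var 1), by ext; rfl⟩

theorem Set.DefinableFun.ofPred_le {A : Set B} {α : Type*} {f g : (α → B) → B}
    (hf : A.DefinableFun boolLang f) (hg : A.DefinableFun boolLang g) :
    A.Definable boolLang {v | f v ≤ g v} :=
  (definable₂_le A).preimage_map (F := fun v => ![f v, g v]) (by simp [DefinableMap, *])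

theorem definable₁_Iic (q : B) : (univ : Set B).Definable₁ boolLang (Iic q) :=
  DefinableFun.ofPred_le (by fun_prop) (boolLang.definableFun_const _ (mem_univ q))

theorem definable₁_Ici (p : B) : (univ : Set B).Definable₁ boolLang (Ici p) :=
  DefinableFun.ofPred_le (boolLang.definableFun_const _ (mem_univ p)) (by fun_prop)

theorem definable_setOf_not_disjoint_inf (c : B) {α : Type*} [Fintype α] :
    (univ : Set B).Definable boolLang {x : α → B | ¬Disjoint c (Finset.univ.inf x)} := by
  have hconst (b : B) : (univ : Set B).DefinableFun boolLang fun _ : α ⊕ Unit → B => b :=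
    boolLang.definableFun_const _ (mem_univ b)
  have hS : (univ : Set B).Definable boolLang
      ({w : α ⊕ Unit → B | w (.inr ()) ≤ c} ∩ (⋂ i, {w | w (.inr ()) ≤ w (.inl i)}) ∩
        {w | w (.inr ()) ≤ ⊥}ᶜ) :=
    ((DefinableFun.ofPred_le (by fun_prop) (hconst c)).inter
      (definable_iInter_of_finite fun i => DefinableFun.ofPred_le (by fun_prop) (by fun_prop))).inter
      (DefinableFun.ofPred_le (by fun_prop) (hconst ⊥)).compl
  convert hS.exists_of_finite using 1
  ext x
  simp only [Disjoint, not_forall, Finset.le_inf_iff, Finset.mem_univ, true_imp_iff, mem_ofPred_eq,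
    mem_inter_iff, mem_iInter, mem_compl_iff, Sum.elim_inr, Sum.elim_inl]
  exact ⟨fun ⟨z, hzc, hzx, hz⟩ => ⟨fun _ => z, ⟨hzc, hzx⟩, hz⟩,
    fun ⟨u, ⟨huc, hux⟩, hu⟩ => ⟨u (), huc, hux, hu⟩⟩

theorem Set.Infinite.Iic_or_Iic_sdiff {x : B} (h : (Iic x).Infinite) (z : B) :
    (Iic z).Infinite ∨ (Iic (x \ z)).Infinite := by
  by_contra! hfin
  refine h ((hfin.1.image2 (· ⊔ ·) hfin.2).subset fun y hy => ?_)
  exact ⟨y ⊓ z, inf_le_right, y \ z, sdiff_le_sdiff_right hy, sup_inf_sdiff y z⟩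

theorem Set.Infinite.exists_ne_bot_Iic_sdiff {x : B} (h : (Iic x).Infinite) :
    ∃ y ≤ x, y ≠ ⊥ ∧ (Iic (x \ y)).Infinite := by
  obtain ⟨z, hzx, hz⟩ := (h.sdiff (toFinite {⊥, x})).nonempty
  simp only [mem_insert_iff, mem_singleton_iff, not_or] at hz
  rcases h.Iic_or_Iic_sdiff z with hz' | hz'
  · refine ⟨x \ z, sdiff_le, ?_, by rwa [sdiff_sdiff_eq_self hzx]⟩
    exact fun h0 => hz.2 (le_antisymm hzx (sdiff_eq_bot_iff.1 h0))
  · exact ⟨z, hzx, hz.1, hz'⟩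

theorem exists_pairwise_disjoint_ne_bot_nat [Infinite B] :
    ∃ d : ℕ → B, Pairwise (Disjoint on d) ∧ ∀ n, d n ≠ ⊥ := by
  choose y hyx hy0 hy using fun x : {x : B // (Iic x).Infinite} => x.2.exists_ne_bot_Iic_sdiff
  let next (x : {x : B // (Iic x).Infinite}) : {x : B // (Iic x).Infinite} := ⟨x \ y x, hy x⟩
  let x (n : ℕ) := next^[n] ⟨⊤, by simpa using infinite_univ⟩
  have hx : Antitone fun n => (x n).1 := antitone_nat_of_succ_le fun n => by
    simp only [x, iterate_succ_apply']
    exact sdiff_le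
  refine ⟨fun n => y (x n), (pairwise_disjoint_on _).2 fun m n hmn => ?_, fun n => hy0 _⟩
  have hle : y (x n) ≤ (x m).1 \ y (x m) := by
    simpa [x, iterate_succ_apply'] using (hyx (x n)).trans (hx (Nat.succ_le_of_lt hmn))
  exact (disjoint_sdiff_self_left.mono_left hle).symm

theorem exists_pairwise_disjoint_ne_bot [Infinite B] (ι : Type*) [Countable ι] :
    ∃ d : ι → B, Pairwise (Disjoint on d) ∧ ∀ i, d i ≠ ⊥ := by
  obtain ⟨e, he⟩ := Countable.exists_injective_nat ι
  obtain ⟨d, hd, hd0⟩ := exists_pairwise_disjoint_ne_bot_nat (B := B)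
  exact ⟨d ∘ e, hd.comp_of_injective he, fun i => hd0 (e i)⟩

theorem Aleph1Saturated.exists_le_and_disjoint (hsat : Aleph1Saturated boolLang B) {ι : Type*}
    [Countable ι] {d : ι → B} (hd : Pairwise (Disjoint on d)) (T : Set ι) :
    ∃ v, (∀ i ∈ T, d i ≤ v) ∧ ∀ i ∉ T, Disjoint v (d i) := by
  classical
  let S (i : ι) : Set B := if i ∈ T then Ici (d i) else Iic (d i)ᶜ
  have hS (i : ι) : (univ : Set B).Definable₁ boolLang (S i) := by
    unfold S; split_ifs
    exacts [definable₁_Ici _, definable₁_Iic _]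
  have hmem (i : ι) (v : B) : v ∈ S i ↔ (i ∈ T → d i ≤ v) ∧ (i ∉ T → Disjoint v (d i)) := by
    by_cases hi : i ∈ T <;> simp [S, hi, le_compl_iff_disjoint_right]
  obtain ⟨v, hv⟩ := hsat.exists_forall_mem hS fun s => by
    refine ⟨(s.filter (· ∈ T)).sup d, fun i hi => (hmem _ _).2 ⟨fun hiT => ?_, fun hiT => ?_⟩⟩
    · exact Finset.le_sup (Finset.mem_filter.2 ⟨hi, hiT⟩)
    · refine Finset.disjoint_sup_left.2 fun j hj => hd ?_
      rintro rfl
      exact hiT (Finset.mem_filter.1 hj).2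
  exact ⟨v, fun i => ((hmem i v).1 (hv i)).1, fun i => ((hmem i v).1 (hv i)).2⟩

section Coding

variable {α : Type*} {d : Finset α → B} {a : α → B}

theorem disjoint_finset_inf_of_not_subset (ha : ∀ i F, i ∉ F → Disjoint (a i) (d F))
    {s F : Finset α} (h : ¬s ⊆ F) : Disjoint (s.inf a) (d F) := by
  obtain ⟨i, his, hiF⟩ := Finset.not_subset.1 h
  exact (ha i F hiF).mono_left (Finset.inf_le his)

theorem injective_of_le_of_disjoint (hd0 : ∀ F, d F ≠ ⊥) (ha_le : ∀ i F, i ∈ F → d F ≤ a i)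
    (ha_disj : ∀ i F, i ∉ F → Disjoint (a i) (d F)) : Injective a := by
  intro i j hij
  by_contra hne
  have hdisj : Disjoint (a j) (d {i}) := ha_disj j {i} (by simpa using Ne.symm hne)
  exact hd0 {i} (hdisj.symm.eq_bot_of_le (hij ▸ ha_le i {i} (Finset.mem_singleton_self i)))

theorem Aleph1Saturated.exists_not_disjoint_finset_inf_iff (hsat : Aleph1Saturated boolLang B)
    [Countable α] (hd0 : ∀ F, d F ≠ ⊥) (ha_le : ∀ i F, i ∈ F → d F ≤ a i)
    (ha_disj : ∀ i F, i ∉ F → Disjoint (a i) (d F)) {𝒜 : Set (Finset α)}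
    (h𝒜 : IsAntichain (· ⊆ ·) 𝒜) (P : Finset α → Prop) :
    ∃ c, ∀ s ∈ 𝒜, (¬Disjoint c (s.inf a) ↔ P s) := by
  classical
  let S (s : 𝒜) : Set B := if P s then (Iic (s.1.inf a)ᶜ)ᶜ else Iic (s.1.inf a)ᶜ
  have hS (s : 𝒜) : (univ : Set B).Definable₁ boolLang (S s) := by
    unfold S; split_ifs
    exacts [(definable₁_Iic _).compl, definable₁_Iic _]
  have hmem (s : 𝒜) (v : B) : v ∈ S s ↔ (¬Disjoint v (s.1.inf a) ↔ P s) := by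
    by_cases hs : P s <;>
      simp only [S, hs, if_true, if_false, mem_compl_iff, mem_Iic, le_compl_iff_disjoint_right,
        iff_true, iff_false, not_not]
  obtain ⟨c, hc⟩ := hsat.exists_forall_mem hS fun t => by
    refine ⟨(t.filter fun s : 𝒜 => P s).sup fun s => d s, fun s hs => (hmem _ _).2 ?_⟩
    by_cases hPs : P s
    · refine iff_of_true (fun hdisj => hd0 s (disjoint_self.1 (hdisj.mono ?_ ?_))) hPs
      exacts [Finset.le_sup (f := fun s : 𝒜 => d s) (Finset.mem_filter.2 ⟨hs, hPs⟩),
        Finset.le_inf fun i hi => ha_le i s hi]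
    · refine iff_of_false (not_not.2 (Finset.disjoint_sup_left.2 fun u hu => ?_)) hPs
      have hsu : s.1 ≠ u.1 := fun h => hPs (h ▸ (Finset.mem_filter.1 hu).2)
      exact (disjoint_finset_inf_of_not_subset ha_disj (h𝒜 s.2 u.2 hsu)).symm
  exact ⟨c, fun s hs => (hmem ⟨s, hs⟩ c).1 (hc _)⟩

end Coding

end BooleanAlgebra

theorem IsHypergraphOn.of_range_eq {V : Type*} {k : ℕ} {A : Set V} {E : (Fin k → V) → Prop}
    (hE : IsHypergraphOn k A E) {x y : Fin k → V} (hx : E x) (hy : Injective y)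
    (hxy : range x = range y) : E y := by
  let σ : Equiv.Perm (Fin k) := ((Equiv.ofInjective y hy).trans (Equiv.setCongr hxy.symm)).trans
    (Equiv.ofInjective x (hE.2.1 x hx)).symm
  have hσ : x ∘ σ = y := funext fun i => by simp [σ, Equiv.apply_ofInjective_symm]
  exact hσ ▸ hE.2.2 σ x hx

theorem IsHypergraphOn.iff_injective_and_not_disjoint {B ι : Type*} [BooleanAlgebra B] {k : ℕ}
    {a : ι → B} {E : (Fin k → B) → Prop} (hE : IsHypergraphOn k (range a) E) {c : B}
    (hc : ∀ s : Finset ι, s.card = k → (¬Disjoint c (s.inf a) ↔ ∃ x, E x ∧ range x = a '' s))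
    {x : Fin k → B} (hx : ∀ i, x i ∈ range a) :
    E x ↔ Injective x ∧ ¬Disjoint c (Finset.univ.inf x) := by
  classical
  choose g hg using hx
  obtain rfl : a ∘ g = x := funext hg
  have hinf : (Finset.univ.image g).inf a = Finset.univ.inf (a ∘ g) :=
    Finset.inf_image _ _ _
  have hrange : a '' ↑(Finset.univ.image g) = range (a ∘ g) := by simp [range_comp]
  have hcard (hinj : Injective (a ∘ g)) : (Finset.univ.image g).card = k := by
    rw [Finset.card_image_of_injective _ hinj.of_comp, Finset.card_univ, Fintype.card_fin]
  constructor
  · intro hEx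
    have hinj := hE.2.1 _ hEx
    exact ⟨hinj, hinf ▸ (hc _ (hcard hinj)).2 ⟨_, hEx, hrange.symm⟩⟩
  · rintro ⟨hinj, hmeet⟩
    obtain ⟨y, hy, hyr⟩ := (hc _ (hcard hinj)).1 (hinf ▸ hmeet)
    exact hE.of_range_eq hy hinj (hyr.trans hrange)

/-- In an infinite `ℵ₁`-saturated Boolean algebra there is a countably infinite set `A` such
that every hypergraph on `A` is traced by a definable set.  (This is the key step in showing
that every infinite Boolean algebra is trace maximal.) -/
theorem boolean_algebra_codes_all_hypergraphs
    (B : Type*) [BooleanAlgebra B] [Infinite B]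
    (hsat : Aleph1Saturated boolLang B) :
    ∃ A : Set B, A.Countable ∧ A.Infinite ∧
      ∀ (k : ℕ), 2 ≤ k → ∀ E : (Fin k → B) → Prop, IsHypergraphOn k A E →
        ∃ Y : Set (Fin k → B), Set.Definable (Set.univ : Set B) boolLang Y ∧
          ∀ a : Fin k → B, (∀ i, a i ∈ A) → (E a ↔ a ∈ Y) := by
  obtain ⟨d, hd, hd0⟩ := exists_pairwise_disjoint_ne_bot (B := B) (Finset ℕ)
  choose a ha_le ha_disj using fun i => hsat.exists_le_and_disjoint hd {F | i ∈ F}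
  refine ⟨range a, countable_range a,
    infinite_range_of_injective (injective_of_le_of_disjoint hd0 ha_le ha_disj), ?_⟩
  intro k _ E hE
  have hsized : ({s | s.card = k} : Set (Finset ℕ)).Sized k := fun _ hs => hs
  obtain ⟨c, hc⟩ := hsat.exists_not_disjoint_finset_inf_iff hd0 ha_le ha_disj hsized.isAntichain
    fun s => ∃ x, E x ∧ range x = a '' s
  exact ⟨{x | Injective x ∧ ¬Disjoint c (Finset.univ.inf x)},
    (definable_setOf_injective _).inter (definable_setOf_not_disjoint_inf c),
    fun x hx => hE.iff_injective_and_not_disjoint hc hx⟩
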